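/- arXiv:2105.01012 — 3 statements merged into one kernel-verified Lean document; each statement's English description precedes it below -/
import Mathlib

section
/- Let X be a compact metrizable space equipped with its Borel σ-algebra, let R be a closed relation on X, and let μ be a Borel probability measure on X such that μ(K) ≤ μ(R†(K)) for every compact set K ⊆ X (note that R†(K) is compact, hence Borel). Then for every Borel set B ⊆ X with μ(B) > 0 there exists a Borel set E' ⊆ B with μ(E') = μ(B) such that every x ∈ E' is infinitely recurrent in B, i.e., for every n ∈ ℕ there exists j ≥ n with R^j(x) ∩ B ≠ ∅. (In other words, μ-almost every point of B returns to B under the iterated relation infinitely often.) -/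
open MeasureTheory Set

/-- Forward image of a set under a relation. -/
def relImg {X : Type*} (R : Set (X × X)) (A : Set X) : Set X :=
  {y | ∃ x ∈ A, (x, y) ∈ R}

/-- Backward image (adjoint image) of a set under a relation. -/
def relDag {X : Type*} (R : Set (X × X)) (A : Set X) : Set X :=
  {x | ∃ y ∈ A, (x, y) ∈ R}

/-- Iterates of a relation: `R⁰` is the identity relation and
`R^{n+1} = {(x,z) : ∃ y, (x,y) ∈ R ∧ (y,z) ∈ R^n}`. -/
def relIter {X : Type*} (R : Set (X × X)) : ℕ → Set (X × X)
  | 0 => {p | p.1 = p.2}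
  | n + 1 => {p | ∃ y, (p.1, y) ∈ R ∧ (y, p.2) ∈ relIter R n}

/-!
Let `C` be compact, `n : ℕ`, and let `K ⊆ C` be a compact set of points that never reach `C`
in `n` or more steps. With `T = (R^{n+1})†` and `U` the set of points reaching `C` in at least
`n + 1` steps, `T (K ∪ U) ⊆ U` and `K` is disjoint from `U`. The compact sets
`V₀ = ∅`, `V_{t+1} = K ∪ T V_t` then satisfy `μ V_{t+1} = μ K + μ (T V_t) ≥ μ K + μ V_t`, so
`t μ(K) ≤ μ(X)` for all `t` and `μ K = 0`. By inner regularity almost every point of `C` returns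
to `C` infinitely often, and a Borel set `B` is exhausted up to a null set by countably many
compact `C ⊆ B`. Compact sets are used throughout because the invariance hypothesis, and the
measurability of `R†(A)`, are only available for them.
-/

open scoped ENNReal

section Relations

variable {X : Type*}

lemma relDag_mono (R : Set (X × X)) : Monotone (relDag R) :=
  SetRel.preimage_mono

lemma relDag_union (R : Set (X × X)) (A B : Set X) :
    relDag R (A ∪ B) = relDag R A ∪ relDag R B :=
  SetRel.preimage_union R A B

lemma relDag_iUnion {ι : Sort*} (R : Set (X × X)) (A : ι → Set X) :
    relDag R (⋃ i, A i) = ⋃ i, relDag R (A i) :=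
  SetRel.preimage_iUnion R A

lemma relImg_singleton_inter_nonempty_iff (R : Set (X × X)) (x : X) (A : Set X) :
    (relImg R {x} ∩ A).Nonempty ↔ x ∈ relDag R A := by
  simp [relImg, relDag, Set.Nonempty, and_comm]

@[simp]
lemma relDag_relIter_zero (R : Set (X × X)) (A : Set X) : relDag (relIter R 0) A = A := by
  ext x
  simp [relDag, relIter]

lemma relDag_relIter_succ (R : Set (X × X)) (n : ℕ) (A : Set X) :
    relDag (relIter R (n + 1)) A = relDag R (relDag (relIter R n) A) :=
  SetRel.preimage_comp R (relIter R n) A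

lemma relDag_relIter_add (R : Set (X × X)) (m n : ℕ) (A : Set X) :
    relDag (relIter R (m + n)) A = relDag (relIter R m) (relDag (relIter R n) A) := by
  induction m with
  | zero => simp
  | succ m ih => rw [Nat.succ_add, relDag_relIter_succ, relDag_relIter_succ, ih]

def recurrentSet (R : Set (X × X)) (C : Set X) : Set X :=
  C ∩ ⋂ n, ⋃ j ≥ n, relDag (relIter R j) C

lemma recurrentSet_subset (R : Set (X × X)) (C : Set X) : recurrentSet R C ⊆ C :=
  inter_subset_left

lemma recurrentSet_mono (R : Set (X × X)) {B C : Set X} (h : C ⊆ B) :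
    recurrentSet R C ⊆ recurrentSet R B :=
  inter_subset_inter h <| iInter_mono fun _ => iUnion₂_mono fun _ _ => relDag_mono _ h

variable [TopologicalSpace X] [CompactSpace X] {R : Set (X × X)}

lemma isCompact_relDag (hR : IsClosed R) {K : Set X} (hK : IsCompact K) :
    IsCompact (relDag R K) := by
  have : relDag R K = Prod.fst '' ((univ ×ˢ K) ∩ R) := by
    ext x
    simp [relDag]
  rw [this]
  exact ((isCompact_univ.prod hK).inter_right hR).image continuous_fst

lemma isCompact_relDag_relIter (hR : IsClosed R) (n : ℕ) {K : Set X} (hK : IsCompact K) :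
    IsCompact (relDag (relIter R n) K) := by
  induction n with
  | zero => simpa
  | succ n ih => simpa only [relDag_relIter_succ] using isCompact_relDag hR ih

end Relations

section Measure

variable {X : Type*} [TopologicalSpace X] [T2Space X] [MeasurableSpace X] [OpensMeasurableSpace X]
  {μ : Measure X} {T : Set X → Set X}

lemma measure_eq_zero_of_disjoint_of_map_union_subset [IsFiniteMeasure μ] (hT : Monotone T)
    (hT_cpt : ∀ A, IsCompact A → IsCompact (T A)) (hμ : ∀ A, IsCompact A → μ A ≤ μ (T A))
    {K U : Set X} (hK : IsCompact K) (hU : T (K ∪ U) ⊆ U) (hKU : Disjoint K U) : μ K = 0 := by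
  set V : ℕ → Set X := fun t => (fun A => K ∪ T A)^[t] ∅
  have hV_succ (t : ℕ) : V (t + 1) = K ∪ T (V t) := Function.iterate_succ_apply' _ _ _
  have hV_cpt (t : ℕ) : IsCompact (V t) := by
    induction t with
    | zero => exact isCompact_empty
    | succ t ih => rw [hV_succ]; exact hK.union (hT_cpt _ ih)
  have hV_sub (t : ℕ) : V t ⊆ K ∪ U := by
    induction t with
    | zero => exact empty_subset _
    | succ t ih => rw [hV_succ]; exact union_subset_union_right K ((hT ih).trans hU)
  have hV_ge (t : ℕ) : t * μ K ≤ μ (V t) := by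
    induction t with
    | zero => simp
    | succ t ih =>
      have hdisj : Disjoint K (T (V t)) := hKU.mono_right ((hT (hV_sub t)).trans hU)
      calc ((t + 1 : ℕ) : ℝ≥0∞) * μ K = μ K + t * μ K := by push_cast; ring
        _ ≤ μ K + μ (T (V t)) := by gcongr; exact ih.trans (hμ _ (hV_cpt t))
        _ = μ (V (t + 1)) := by
          rw [hV_succ, measure_union hdisj (hT_cpt _ (hV_cpt t)).measurableSet]
  by_contra hK0
  obtain ⟨t, ht⟩ := ENNReal.exists_nat_mul_gt hK0 (measure_ne_top μ univ)
  exact (ht.trans_le ((hV_ge t).trans (measure_mono (subset_univ _)))).false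

lemma MeasurableSet.exists_isCompact_seq_measure_sdiff_iUnion_eq_zero
    [μ.InnerRegularCompactLTTop] {B : Set X} (hB : MeasurableSet B) (hμB : μ B ≠ ∞) :
    ∃ C : ℕ → Set X, (∀ k, C k ⊆ B) ∧ (∀ k, IsCompact (C k)) ∧ μ (B \ ⋃ k, C k) = 0 := by
  choose C hCB hC hμC using fun k : ℕ =>
    hB.exists_isCompact_sdiff_lt hμB (ENNReal.inv_ne_zero.2 (ENNReal.natCast_ne_top k))
  refine ⟨C, hCB, hC, ?_⟩
  by_contra h
  obtain ⟨k, hk⟩ := ENNReal.exists_inv_nat_lt h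
  exact ((hk.trans_le (measure_mono (sdiff_subset_sdiff_right (subset_iUnion C k)))).trans
    (hμC k)).false

end Measure

section Recurrence

variable {X : Type*} [TopologicalSpace X] [CompactSpace X] [MeasurableSpace X]
  {R : Set (X × X)} {μ : Measure X}

lemma le_measure_relDag_relIter (hR : IsClosed R)
    (hμ : ∀ K, IsCompact K → μ K ≤ μ (relDag R K)) (n : ℕ) {K : Set X} (hK : IsCompact K) :
    μ K ≤ μ (relDag (relIter R n) K) := by
  induction n with
  | zero => simp
  | succ n ih =>
    rw [relDag_relIter_succ]
    exact ih.trans (hμ _ (isCompact_relDag_relIter hR n hK))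

variable [T2Space X] [OpensMeasurableSpace X]

lemma measurableSet_recurrentSet (hR : IsClosed R) {C : Set X} (hC : IsCompact C) :
    MeasurableSet (recurrentSet R C) :=
  hC.measurableSet.inter <| .iInter fun _ => .iUnion fun j => .iUnion fun _ =>
    (isCompact_relDag_relIter hR j hC).measurableSet

variable [IsFiniteMeasure μ] [μ.InnerRegularCompactLTTop]

lemma measure_sdiff_iUnion_relDag_relIter_eq_zero (hR : IsClosed R)
    (hμ : ∀ K, IsCompact K → μ K ≤ μ (relDag R K)) {C : Set X} (hC : IsCompact C) (n : ℕ) :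
    μ (C \ ⋃ j ≥ n, relDag (relIter R j) C) = 0 := by
  have hmeas : MeasurableSet (C \ ⋃ j ≥ n, relDag (relIter R j) C) :=
    hC.measurableSet.diff <| .iUnion fun j => .iUnion fun _ =>
      (isCompact_relDag_relIter hR j hC).measurableSet
  rw [hmeas.measure_eq_iSup_isCompact]
  simp only [ENNReal.iSup_eq_zero]
  intro K hKC hK
  set U := ⋃ j ≥ n + 1, relDag (relIter R j) C
  refine measure_eq_zero_of_disjoint_of_map_union_subset (T := relDag (relIter R (n + 1)))
    (relDag_mono _) (fun A hA => isCompact_relDag_relIter hR _ hA)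
    (fun A hA => le_measure_relDag_relIter hR hμ _ hA) hK (U := U) ?_ ?_
  · rw [relDag_union]
    refine union_subset ?_ ?_
    · exact (relDag_mono _ (hKC.trans sdiff_subset)).trans
        (subset_iUnion₂_of_subset (n + 1) le_rfl subset_rfl)
    · simp only [U, relDag_iUnion, ← relDag_relIter_add]
      exact iUnion₂_subset fun j hj => subset_iUnion₂_of_subset (n + 1 + j) (by omega) subset_rfl
  · exact disjoint_sdiff_left.mono hKC (iUnion₂_mono' fun j hj => ⟨j, by omega, subset_rfl⟩)

lemma measure_sdiff_recurrentSet_eq_zero (hR : IsClosed R)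
    (hμ : ∀ K, IsCompact K → μ K ≤ μ (relDag R K)) {C : Set X} (hC : IsCompact C) :
    μ (C \ recurrentSet R C) = 0 := by
  rw [recurrentSet, sdiff_self_inter, sdiff_iInter]
  exact measure_iUnion_null (measure_sdiff_iUnion_relDag_relIter_eq_zero hR hμ hC)

end Recurrence

theorem poincare_recurrence_closed_relation_general
    {X : Type*} [TopologicalSpace X] [CompactSpace X] [TopologicalSpace.MetrizableSpace X]
    [MeasurableSpace X] [BorelSpace X]
    (R : Set (X × X)) (hR : IsClosed R)
    (μ : Measure X) [IsProbabilityMeasure μ]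
    (hinv : ∀ K : Set X, IsCompact K → μ K ≤ μ (relDag R K))
    (B : Set X) (hB : MeasurableSet B) :
    ∃ E' : Set X, MeasurableSet E' ∧ E' ⊆ B ∧ μ E' = μ B ∧
      ∀ x ∈ E', ∀ n : ℕ, ∃ j ≥ n, (relImg (relIter R j) {x} ∩ B).Nonempty := by
  obtain ⟨C, hCB, hC, hBC⟩ :=
    hB.exists_isCompact_seq_measure_sdiff_iUnion_eq_zero (measure_ne_top μ B)
  have hE : ⋃ k, recurrentSet R (C k) ⊆ recurrentSet R B :=
    iUnion_subset fun k => recurrentSet_mono R (hCB k)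
  have hEB := hE.trans (recurrentSet_subset R B)
  have hnull : μ (B \ ⋃ k, recurrentSet R (C k)) = 0 := by
    refine measure_mono_null ?_ <| measure_union_null hBC <|
      measure_iUnion_null fun k => measure_sdiff_recurrentSet_eq_zero hR hinv (hC k)
    intro x
    simp only [mem_sdiff, mem_union, mem_iUnion, not_exists]
    grind
  refine ⟨_, .iUnion fun k => measurableSet_recurrentSet hR (hC k), hEB,
    measure_eq_measure_of_null_sdiff hEB hnull, fun x hx n => ?_⟩
  obtain ⟨j, hj, hxj⟩ := mem_iUnion₂.1 (mem_iInter.1 (hE hx).2 n)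
  exact ⟨j, hj, (relImg_singleton_inter_nonempty_iff _ _ _).2 hxj⟩

/-- **Poincaré recurrence for closed relations** (relation-theoretic content of
Theorem 1.1 of the paper). -/
theorem poincare_recurrence_closed_relation
    {X : Type*} [TopologicalSpace X] [CompactSpace X] [TopologicalSpace.MetrizableSpace X]
    [MeasurableSpace X] [BorelSpace X]
    (R : Set (X × X)) (hR : IsClosed R)
    (μ : Measure X) [IsProbabilityMeasure μ]
    (hinv : ∀ K : Set X, IsCompact K → μ K ≤ μ (relDag R K))
    (B : Set X) (hB : MeasurableSet B) (hBpos : 0 < μ B) :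
    ∃ E' : Set X, MeasurableSet E' ∧ E' ⊆ B ∧ μ E' = μ B ∧
      ∀ x ∈ E', ∀ n : ℕ, ∃ j ≥ n, (relImg (relIter R j) {x} ∩ B).Nonempty :=
  poincare_recurrence_closed_relation_general R hR μ hinv B hB
end

section
/- Let X be a compact metrizable space equipped with its Borel σ-algebra, let R be a closed relation on X, and let μ be a Borel probability measure on X such that μ(K) ≤ μ(R(K)) for every compact set K ⊆ X (note that R(K) is compact, hence Borel). Then for every Borel set B ⊆ X with μ(B) > 0 there exists a Borel set E' ⊆ B with μ(E') = μ(B) such that every x ∈ E' is infinitely backward recurrent in B, i.e., for every n ∈ ℕ there exists j ≥ n with (R^j)†(x) ∩ B ≠ ∅. -/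
open MeasureTheory Set

/-!
Fix a compact `K` and `n`, and put `S = R^(n+1)`. If the points of `K` that do not return to
`K` after time `n` had positive measure, inner regularity would give a compact `K'` of positive
measure among them with `K' ∩ S^m(K') = ∅` for all `m ≥ 1`. For a relation the images
`S^m(K')` need not be pairwise disjoint, so one uses instead `W_0 := ∅`,
`W_{m+1} := S(K' ∪ W_m) ⊆ ⋃_{m ≥ 1} S^m(K')`: these are disjoint from `K'`, so the expansion
hypothesis gives `μ W_{m+1} ≥ μ K' + μ W_m`, hence `μ W_m ≥ m μ K'`, impossible for a finite
measure. A Borel set is exhausted up to measure zero by its compact subsets.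
-/

open Filter
open scoped ENNReal

section Relation

variable {X : Type*}

lemma relImg_mono (R : Set (X × X)) : Monotone (relImg R) := by
  rintro A B hAB y ⟨x, hx, hxy⟩
  exact ⟨x, hAB hx, hxy⟩

lemma relImg_iUnion {ι : Sort*} (R : Set (X × X)) (s : ι → Set X) :
    relImg R (⋃ i, s i) = ⋃ i, relImg R (s i) := by
  ext y
  constructor
  · rintro ⟨x, hx, hxy⟩
    obtain ⟨i, hi⟩ := mem_iUnion.1 hx
    exact mem_iUnion.2 ⟨i, x, hi, hxy⟩
  · intro hy
    obtain ⟨i, x, hx, hxy⟩ := mem_iUnion.1 hy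
    exact ⟨x, mem_iUnion.2 ⟨i, hx⟩, hxy⟩

lemma relImg_relIter (R : Set (X × X)) (j : ℕ) : relImg (relIter R j) = (relImg R)^[j] := by
  induction j with
  | zero =>
    ext A y
    exact ⟨fun ⟨x, hx, (hxy : x = y)⟩ => hxy ▸ hx, fun hy => ⟨y, hy, rfl⟩⟩
  | succ j ih =>
    ext A z
    rw [Function.iterate_succ_apply, ← ih]
    exact ⟨fun ⟨x, hx, y, hxy, hyz⟩ => ⟨y, ⟨x, hx, hxy⟩, hyz⟩,
      fun ⟨y, ⟨x, hx, hxy⟩, hyz⟩ => ⟨x, hx, y, hxy, hyz⟩⟩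

lemma relDag_singleton_inter_nonempty_iff (R : Set (X × X)) (x : X) (B : Set X) :
    (relDag R {x} ∩ B).Nonempty ↔ x ∈ relImg R B := by
  constructor
  · rintro ⟨y, ⟨_, rfl, hyx⟩, hy⟩
    exact ⟨y, hy, hyx⟩
  · rintro ⟨y, hy, hyx⟩
    exact ⟨y, ⟨x, rfl, hyx⟩, hy⟩

end Relation

section Topology

variable {X : Type*} [TopologicalSpace X] [CompactSpace X] {R : Set (X × X)}

lemma IsClosed.isCompact_relImg (hR : IsClosed R) {K : Set X} (hK : IsCompact K) :
    IsCompact (relImg R K) := by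
  have : relImg R K = Prod.snd '' (R ∩ K ×ˢ univ) := by
    ext y
    exact ⟨fun ⟨x, hx, hxy⟩ => ⟨(x, y), ⟨hxy, hx, trivial⟩, rfl⟩,
      fun ⟨p, ⟨hp, hp1, _⟩, hpy⟩ => ⟨p.1, hp1, hpy ▸ hp⟩⟩
  rw [this]
  exact ((hK.prod isCompact_univ).inter_left hR).image continuous_snd

lemma IsClosed.isCompact_iterate_relImg (hR : IsClosed R) (j : ℕ) {K : Set X}
    (hK : IsCompact K) : IsCompact ((relImg R)^[j] K) := by
  induction j generalizing K with
  | zero => exact hK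
  | succ j ih => exact ih (hR.isCompact_relImg hK)

end Topology

section Measure

variable {X : Type*} [TopologicalSpace X] [MeasurableSpace X] {μ : Measure X}

lemma measure_le_iterate_relImg {R : Set (X × X)}
    (hR : ∀ K, IsCompact K → IsCompact (relImg R K))
    (hμR : ∀ K, IsCompact K → μ K ≤ μ (relImg R K)) (j : ℕ) {K : Set X} (hK : IsCompact K) :
    μ K ≤ μ ((relImg R)^[j] K) := by
  induction j generalizing K with
  | zero => rfl
  | succ j ih => exact (hμR K hK).trans (ih (hR K hK))

variable [T2Space X] [OpensMeasurableSpace X]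

lemma exists_pos_iterate_relImg_inter_nonempty [IsFiniteMeasure μ] {S : Set (X × X)}
    (hS : ∀ K, IsCompact K → IsCompact (relImg S K))
    (hμS : ∀ K, IsCompact K → μ K ≤ μ (relImg S K)) {K : Set X} (hK : IsCompact K)
    (hμK : μ K ≠ 0) : ∃ m, 0 < m ∧ (K ∩ (relImg S)^[m] K).Nonempty := by
  by_contra! h_no_return
  set orbit := ⋃ j, (relImg S)^[j] K
  have hK_orbit : K ⊆ orbit := subset_iUnion_of_subset 0 subset_rfl
  have hS_orbit : relImg S orbit = ⋃ j, (relImg S)^[j + 1] K := by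
    simp only [orbit, relImg_iUnion, Function.iterate_succ_apply']
  have hK_disj_orbit : Disjoint K (relImg S orbit) := by
    rw [hS_orbit, disjoint_iUnion_right]
    exact fun j => disjoint_iff_inter_eq_empty.2 (h_no_return (j + 1) j.succ_pos)
  let W : ℕ → Set X := fun m => (fun A => relImg S (K ∪ A))^[m] ∅
  have hW_succ (m : ℕ) : W (m + 1) = relImg S (K ∪ W m) := Function.iterate_succ_apply' _ _ _
  have hW_sub (m : ℕ) : W m ⊆ relImg S orbit := by
    induction m with
    | zero => exact empty_subset _
    | succ m ih =>
      rw [hW_succ]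
      refine relImg_mono S (union_subset hK_orbit (ih.trans ?_))
      rw [hS_orbit]
      exact iUnion_subset fun j => subset_iUnion (fun j => (relImg S)^[j] K) (j + 1)
  have hW_compact (m : ℕ) : IsCompact (W m) := by
    induction m with
    | zero => exact isCompact_empty
    | succ m ih => rw [hW_succ]; exact hS _ (hK.union ih)
  have hW_measure (m : ℕ) : m * μ K ≤ μ (W m) := by
    induction m with
    | zero => simp
    | succ m ih =>
      calc ((m + 1 : ℕ) : ℝ≥0∞) * μ K = μ K + m * μ K := by push_cast; ring
        _ ≤ μ K + μ (W m) := by gcongr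
        _ = μ (K ∪ W m) :=
          (measure_union (hK_disj_orbit.mono_right (hW_sub m)) (hW_compact m).measurableSet).symm
        _ ≤ μ (W (m + 1)) := hW_succ m ▸ hμS _ (hK.union (hW_compact m))
  obtain ⟨m, hm⟩ := ENNReal.exists_nat_mul_gt hμK (measure_ne_top μ univ)
  exact (hm.trans_le (hW_measure m)).not_ge (measure_mono (subset_univ _))

lemma ae_imp_of_forall_isCompact_subset [μ.InnerRegularCompactLTTop] {p : X → Prop}
    {B : Set X} (hB : MeasurableSet B) (hμB : μ B ≠ ∞)
    (h : ∀ K ⊆ B, IsCompact K → ∀ᵐ x ∂μ, x ∈ K → p x) : ∀ᵐ x ∂μ, x ∈ B → p x := by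
  rw [ae_iff]
  refine nonpos_iff_eq_zero.1 (le_of_forall_gt fun ε hε => ?_)
  obtain ⟨K, hKB, hK, hμBK⟩ := hB.exists_isCompact_sdiff_lt hμB hε.ne'
  have hK_null : μ {x | ¬(x ∈ K → p x)} = 0 := ae_iff.1 (h K hKB hK)
  calc μ {x | ¬(x ∈ B → p x)} ≤ μ (B \ K ∪ {x | ¬(x ∈ K → p x)}) :=
        measure_mono fun x hx => by by_cases hxK : x ∈ K <;> simp_all
    _ ≤ μ (B \ K) + μ {x | ¬(x ∈ K → p x)} := measure_union_le _ _
    _ < ε := by rwa [hK_null, add_zero]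

end Measure

section Recurrence

variable {X : Type*} [TopologicalSpace X] [CompactSpace X] [T2Space X] [MeasurableSpace X]
  [BorelSpace X] {μ : Measure X} [IsFiniteMeasure μ] [μ.InnerRegularCompactLTTop]
  {R : Set (X × X)}

lemma ae_exists_ge_mem_iterate_relImg (hR : IsClosed R)
    (hμR : ∀ K, IsCompact K → μ K ≤ μ (relImg R K)) {K : Set X} (hK : IsCompact K) (n : ℕ) :
    ∀ᵐ x ∂μ, x ∈ K → ∃ j ≥ n, x ∈ (relImg R)^[j] K := by
  set returning := ⋃ j ≥ n, (relImg R)^[j] K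
  have h_returning : MeasurableSet returning :=
    .biUnion (to_countable _) fun j _ => (hR.isCompact_iterate_relImg j hK).measurableSet
  suffices μ (K \ returning) = 0 by
    filter_upwards [measure_eq_zero_iff_ae_notMem.1 this] with x hx hxK
    simpa [returning, hxK] using hx
  by_contra hμ
  obtain ⟨K', hK'_sub, hK', hμK'⟩ :=
    (hK.measurableSet.diff h_returning).exists_lt_isCompact_of_ne_top (measure_ne_top μ _)
      (pos_iff_ne_zero.2 hμ)
  have hS := relImg_relIter R (n + 1)
  obtain ⟨m, hm, x, hxK', hx⟩ := exists_pos_iterate_relImg_inter_nonempty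
    (S := relIter R (n + 1)) (fun K hK => hS ▸ hR.isCompact_iterate_relImg (n + 1) hK)
    (fun K hK => hS ▸ measure_le_iterate_relImg (fun _ => hR.isCompact_relImg) hμR (n + 1) hK)
    hK' hμK'.ne'
  rw [hS, ← Function.iterate_mul] at hx
  refine (hK'_sub hxK').2 (mem_iUnion₂.2 ⟨(n + 1) * m, ?_, ?_⟩)
  · nlinarith
  · exact (relImg_mono R).iterate _ (hK'_sub.trans sdiff_subset) hx

lemma ae_frequently_mem_iterate_relImg (hR : IsClosed R)
    (hμR : ∀ K, IsCompact K → μ K ≤ μ (relImg R K)) {K : Set X} (hK : IsCompact K) :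
    ∀ᵐ x ∂μ, x ∈ K → ∃ᶠ j in atTop, x ∈ (relImg R)^[j] K := by
  filter_upwards [ae_all_iff.2 (ae_exists_ge_mem_iterate_relImg hR hμR hK)] with x hx hxK
  exact frequently_atTop.2 fun n => hx n hxK

end Recurrence

theorem poincare_backward_recurrence_closed_relation_general
    {X : Type*} [TopologicalSpace X] [CompactSpace X] [TopologicalSpace.MetrizableSpace X]
    [MeasurableSpace X] [BorelSpace X]
    (R : Set (X × X)) (hR : IsClosed R)
    (μ : Measure X) [IsProbabilityMeasure μ]
    (hinv : ∀ K : Set X, IsCompact K → μ K ≤ μ (relImg R K))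
    (B : Set X) (hB : MeasurableSet B) :
    ∃ E' : Set X, MeasurableSet E' ∧ E' ⊆ B ∧ μ E' = μ B ∧
      ∀ x ∈ E', ∀ n : ℕ, ∃ j ≥ n, (relDag (relIter R j) {x} ∩ B).Nonempty := by
  have h_rec : ∀ᵐ x ∂μ, x ∈ B → ∃ᶠ j in atTop, x ∈ (relImg R)^[j] B :=
    ae_imp_of_forall_isCompact_subset hB (measure_ne_top μ B) fun K hKB hK =>
      (ae_frequently_mem_iterate_relImg hR hinv hK).mono fun x hx hxK =>
        (hx hxK).mono fun j hj => (relImg_mono R).iterate j hKB hj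
  obtain ⟨s, hs_ae, hs, h_rec_s⟩ := h_rec.exists_measurable_mem
  refine ⟨B ∩ s, hB.inter hs, inter_subset_left, measure_inter_conull hs_ae, fun x hx n => ?_⟩
  obtain ⟨j, hjn, hj⟩ := frequently_atTop.1 (h_rec_s x hx.2 hx.1) n
  exact ⟨j, hjn, (relDag_singleton_inter_nonempty_iff _ x B).2 (relImg_relIter R j ▸ hj)⟩

/-- **Backward Poincaré recurrence for closed relations** (relation-theoretic content of
the Corollary in Section 6 of the paper). -/
theorem poincare_backward_recurrence_closed_relation
    {X : Type*} [TopologicalSpace X] [CompactSpace X] [TopologicalSpace.MetrizableSpace X]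
    [MeasurableSpace X] [BorelSpace X]
    (R : Set (X × X)) (hR : IsClosed R)
    (μ : Measure X) [IsProbabilityMeasure μ]
    (hinv : ∀ K : Set X, IsCompact K → μ K ≤ μ (relImg R K))
    (B : Set X) (hB : MeasurableSet B) (hBpos : 0 < μ B) :
    ∃ E' : Set X, MeasurableSet E' ∧ E' ⊆ B ∧ μ E' = μ B ∧
      ∀ x ∈ E', ∀ n : ℕ, ∃ j ≥ n, (relDag (relIter R j) {x} ∩ B).Nonempty :=
  poincare_backward_recurrence_closed_relation_general R hR μ hinv B hB
end

section
/- Let X be a compact metrizable space equipped with its Borel σ-algebra, let R be a closed relation on X, and let μ be a Borel probability measure on X such that μ(K) ≤ μ(R(K)) and μ(K) ≤ μ(R†(K)) for every compact set K ⊆ X (note that R(K) and R†(K) are compact, hence Borel). Then for every point z in the support of μ and every n ∈ ℤ₊, both R^n(z) ∩ supp(μ) ≠ ∅ and (R^n)†(z) ∩ supp(μ) ≠ ∅; in particular every point of supp(μ) returns to supp(μ) at every time n. -/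
open MeasureTheory Set

/-- The support of a Borel measure: the set of points all of whose open neighborhoods
have positive measure. -/
def measSupp {X : Type*} [TopologicalSpace X] [MeasurableSpace X]
    (μ : MeasureTheory.Measure X) : Set X :=
  {x | ∀ U : Set X, IsOpen U → x ∈ U → 0 < μ U}

/-!
If `z ∈ supp μ`, every closed neighbourhood `K` of `z` has `μ K > 0`, hence `μ (R K) > 0`, so
`R K` meets the conull set `supp μ`; that is, `K` meets `R†(supp μ)`. This set is closed because
`R` is closed and `X` is compact, so `z` lies in it: `z` has an `R`-successor in the support.
Transposing `R` gives predecessors, and chaining successors (predecessors) gives the claim for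
every iterate.
-/

section Relation

variable {X : Type*} {R : Set (X × X)} {S : Set X}

lemma relDag_preimage_swap (A : Set X) : relDag (Prod.swap ⁻¹' R) A = relImg R A := rfl

lemma relDag_eq_image (A : Set X) : relDag R A = Prod.fst '' (R ∩ Prod.snd ⁻¹' A) := by
  ext x
  constructor
  · rintro ⟨y, hy, hxy⟩
    exact ⟨(x, y), ⟨hxy, hy⟩, rfl⟩
  · rintro ⟨⟨x, y⟩, ⟨hxy, hy⟩, rfl⟩
    exact ⟨y, hy, hxy⟩

lemma IsClosed.relDag [TopologicalSpace X] [CompactSpace X] (hR : IsClosed R) {A : Set X}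
    (hA : IsClosed A) : IsClosed (relDag R A) := by
  rw [relDag_eq_image]
  exact isClosedMap_fst_of_compactSpace _ (hR.inter (hA.preimage continuous_snd))

lemma subset_relDag_relIter (h : S ⊆ relDag R S) (n : ℕ) : S ⊆ relDag (relIter R n) S := by
  induction n with
  | zero => exact fun z hz => ⟨z, hz, rfl⟩
  | succ n ih =>
    intro z hz
    obtain ⟨y, hy, hzy⟩ := h hz
    obtain ⟨w, hw, hyw⟩ := ih hy
    exact ⟨w, hw, y, hzy, hyw⟩

lemma subset_relImg_relIter (h : S ⊆ relImg R S) (n : ℕ) : S ⊆ relImg (relIter R n) S := by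
  induction n with
  | zero => exact fun z hz => ⟨z, hz, rfl⟩
  | succ n ih =>
    intro z hz
    obtain ⟨y, hy, hyz⟩ := ih hz
    obtain ⟨x, hx, hxy⟩ := h hy
    exact ⟨x, hx, y, hxy, hyz⟩

end Relation

section Support

variable {X : Type*} [TopologicalSpace X] [MeasurableSpace X] {μ : Measure X} {R : Set (X × X)}

lemma measSupp_eq_support (μ : Measure X) : measSupp μ = μ.support := by
  rw [Measure.support_eq_forall_isOpen]
  ext x
  exact ⟨fun h U hxU hU => h U hU hxU, fun h U hU hxU => h U hxU hU⟩

variable [CompactSpace X] [RegularSpace X] [HereditarilyLindelofSpace X]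

lemma support_subset_relDag_support (hR : IsClosed R)
    (hfwd : ∀ K : Set X, IsCompact K → μ K ≤ μ (relImg R K)) :
    μ.support ⊆ relDag R μ.support := by
  intro z hz
  rw [← (hR.relDag Measure.isClosed_support).closure_eq,
    mem_closure_iff_nhds_basis (closed_nhds_basis z)]
  rintro K ⟨hKz, hK⟩
  have hμK : 0 < μ K := (Measure.mem_support_iff_forall z).1 hz K hKz
  obtain ⟨y, ⟨x, hxK, hxy⟩, hy⟩ :=
    Measure.nonempty_inter_support_of_pos (hμK.trans_le (hfwd K hK.isCompact))
  exact ⟨x, ⟨y, hy, hxy⟩, hxK⟩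

lemma support_subset_relImg_support (hR : IsClosed R)
    (hbwd : ∀ K : Set X, IsCompact K → μ K ≤ μ (relDag R K)) :
    μ.support ⊆ relImg R μ.support := by
  rw [← relDag_preimage_swap]
  exact support_subset_relDag_support (hR.preimage continuous_swap) hbwd

end Support

theorem support_invariance_closed_relation_general
    {X : Type*} [TopologicalSpace X] [CompactSpace X] [TopologicalSpace.MetrizableSpace X]
    [MeasurableSpace X]
    (R : Set (X × X)) (hR : IsClosed R)
    (μ : Measure X)
    (hfwd : ∀ K : Set X, IsCompact K → μ K ≤ μ (relImg R K))
    (hbwd : ∀ K : Set X, IsCompact K → μ K ≤ μ (relDag R K)) :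
    ∀ z ∈ measSupp μ, ∀ n : ℕ, 1 ≤ n →
      (relImg (relIter R n) {z} ∩ measSupp μ).Nonempty ∧
      (relDag (relIter R n) {z} ∩ measSupp μ).Nonempty := by
  rw [measSupp_eq_support]
  intro z hz n _
  obtain ⟨y, hy, hzy⟩ := subset_relDag_relIter (support_subset_relDag_support hR hfwd) n hz
  obtain ⟨x, hx, hxz⟩ := subset_relImg_relIter (support_subset_relImg_support hR hbwd) n hz
  exact ⟨⟨y, ⟨z, rfl, hzy⟩, hy⟩, ⟨x, ⟨z, rfl, hxz⟩, hx⟩⟩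

/-- **Invariance of the support** (relation-theoretic content of Theorem 1.4 of the
paper): every point of the support of `μ` returns to the support, forwards and
backwards, at every time `n ≥ 1`. -/
theorem support_invariance_closed_relation
    {X : Type*} [TopologicalSpace X] [CompactSpace X] [TopologicalSpace.MetrizableSpace X]
    [MeasurableSpace X] [BorelSpace X]
    (R : Set (X × X)) (hR : IsClosed R)
    (μ : Measure X) [IsProbabilityMeasure μ]
    (hfwd : ∀ K : Set X, IsCompact K → μ K ≤ μ (relImg R K))
    (hbwd : ∀ K : Set X, IsCompact K → μ K ≤ μ (relDag R K)) :
    ∀ z ∈ measSupp μ, ∀ n : ℕ, 1 ≤ n →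
      (relImg (relIter R n) {z} ∩ measSupp μ).Nonempty ∧
      (relDag (relIter R n) {z} ∩ measSupp μ).Nonempty :=
  support_invariance_closed_relation_general R hR μ hfwd hbwd
end
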